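/- In the AAF construction from OLA vectors, for any tree T and any component index i, the subtree of T rooted at the root of T(L_i) contains no leaf l_j with j < m_i; consequently the inheritance graph of the constructed forest admits (L_0, L_1, ..., L_k) as a topological ordering and is therefore acyclic. -/

import Mathlib

open scoped Classical

namespace OLA

/-- Rooted binary phylogenetic trees with `ℕ`-labeled leaves. -/
inductive BTree where
  | leaf (x : ℕ)
  | node (l r : BTree)
deriving DecidableEq

namespace BTree

def leafList : BTree → List ℕ
  | .leaf x => [x]
  | .node l r => leafList l ++ leafList r

def leafSet (t : BTree) : Finset ℕ := t.leafList.toFinset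

/-- `t` is a phylogenetic tree on the leaf set `{0, …, n-1}`. -/
def IsPhylo (t : BTree) (n : ℕ) : Prop :=
  t.leafList.Nodup ∧ t.leafSet = Finset.range n

def minLeaf : BTree → ℕ
  | .leaf x => x
  | .node l r => min (minLeaf l) (minLeaf r)

/-- OLA index of the root of a (sub)tree: leaf label, or minus the second
smallest of the minimal leaves of the two children. -/
def idx : BTree → ℤ
  | .leaf x => (x : ℤ)
  | .node l r => -(max (minLeaf l) (minLeaf r) : ℤ)

/-- Restriction `T^i` of `t` to the leaves labeled `≤ i` (suppressing
degree-2 nodes); `none` if no such leaf exists. -/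
def restrictLe : BTree → ℕ → Option BTree
  | .leaf x, i => if x ≤ i then some (.leaf x) else none
  | .node l r, i =>
    match restrictLe l i, restrictLe r i with
    | some l', some r' => some (.node l' r')
    | some l', none => some l'
    | none, some r' => some r'
    | none, none => none

/-- Restriction `T|_S` of `t` to the leaves in `S` (suppressing degree-2 nodes). -/
def restrictTo : BTree → Finset ℕ → Option BTree
  | .leaf x, S => if x ∈ S then some (.leaf x) else none
  | .node l r, S =>
    match restrictTo l S, restrictTo r S with
    | some l', some r' => some (.node l' r')
    | some l', none => some l'
    | none, some r' => some r'
    | none, none => none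

/-- OLA index of the sibling of the leaf labeled `i`, if it exists. -/
def siblingIdx : BTree → ℕ → Option ℤ
  | .leaf _, _ => none
  | .node l r, i =>
    if l = .leaf i then some r.idx
    else if r = .leaf i then some l.idx
    else (siblingIdx l i).orElse (fun _ => siblingIdx r i)

/-- The OLA vector entry of `t` at position `i ≥ 1`: the index of the sibling
of leaf `i` in the restriction of `t` to leaves `0, …, i`. -/
def olaEntry (t : BTree) (i : ℕ) : ℤ :=
  ((t.restrictLe i).bind (fun t' => t'.siblingIdx i)).getD 0

def relabel (f : ℕ → ℕ) : BTree → BTree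
  | .leaf x => .leaf (f x)
  | .node l r => .node (relabel f l) (relabel f r)

/-- The set of clusters (leaf sets of rooted subtrees) of `t`.  Two leaf-labeled
trees over the same leaf set are isomorphic iff their cluster sets coincide. -/
def clusters : BTree → Set (Set ℕ)
  | .leaf x => {{x}}
  | .node l r => insert {y | y ∈ (node l r).leafList} (clusters l ∪ clusters r)

def subtreeAt : BTree → List Bool → Option BTree
  | t, [] => some t
  | .leaf _, _ :: _ => none
  | .node l _, false :: p => subtreeAt l p
  | .node _ r, true :: p => subtreeAt r p

/-- `w` occurs as a rooted subtree (i.e. the subtree below a node) of `t`. -/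
def IsNode (t w : BTree) : Prop := ∃ p, t.subtreeAt p = some w

/-- The position of the least common ancestor of the leaves in `S`. -/
def lcaPos : BTree → Finset ℕ → List Bool
  | .leaf _, _ => []
  | .node l r, S =>
    if S ⊆ l.leafSet then false :: lcaPos l S
    else if S ⊆ r.leafSet then true :: lcaPos r S
    else []

/-- Positions of the nodes of the minimal spanning subtree `T(S)`. -/
def spanNodes (t : BTree) (S : Finset ℕ) : Set (List Bool) :=
  {p | t.lcaPos S <+: p ∧ ∃ u, t.subtreeAt p = some u ∧ ∃ x ∈ S, x ∈ u.leafList}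

end BTree

/-- OLA vector of tree `t` under the leaf ordering `σ` (leaf `x` is the
`σ x`-th leaf in the order). -/
def ola (t : BTree) (σ : Equiv.Perm ℕ) (i : ℕ) : ℤ :=
  (t.relabel σ).olaEntry i

/-- `σ` is a valid leaf ordering of the leaf set `{0, …, n-1}`. -/
def IsOrdering (σ : Equiv.Perm ℕ) (n : ℕ) : Prop := ∀ x < n, σ x < n

/-- The set of (corrected) mismatched indices among `{1, …, i}` of a family of
OLA vectors: an index is mismatched if two of the vectors differ there, or if
all vectors place that leaf above the internal node created by an
already-mismatched leaf. -/
noncomputable def mismatch {ι : Type*} (v : ι → ℕ → ℤ) : ℕ → Finset ℕ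
  | 0 => ∅
  | i + 1 =>
    let M := mismatch v i
    if (∃ a b : ι, v a (i+1) ≠ v b (i+1)) ∨ (∃ j ∈ M, ∀ a : ι, v a (i+1) = -(j : ℤ))
    then insert (i+1) M else M

/-- Corrected OLA distance of a family of OLA vectors of trees on `n` leaves. -/
noncomputable def corrDist {ι : Type*} (v : ι → ℕ → ℤ) (n : ℕ) : ℕ :=
  (mismatch v (n-1)).card

/-- Hamming OLA distance: the number of indices where at least two vectors differ. -/
noncomputable def hamDist {ι : Type*} (v : ι → ℕ → ℤ) (n : ℕ) : ℕ :=
  ((Finset.Icc 1 (n-1)).filter fun i => ∃ a b : ι, v a i ≠ v b i).card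

/-- `comp` is an agreement forest for the trees `ts` over leaf set `{0,…,n-1}`:
components have pairwise disjoint leaf sets partitioning the full leaf set,
each tree restricted to a component's leaves is isomorphic to the component,
and the spanning subtrees are node-disjoint in each tree. -/
def IsAF {ι : Type*} (ts : ι → BTree) (n : ℕ) {f : ℕ} (comp : Fin f → BTree) : Prop :=
  (∀ i, (comp i).leafList.Nodup) ∧
  (∀ i j, i ≠ j → Disjoint (comp i).leafSet (comp j).leafSet) ∧
  (Finset.univ.biUnion (fun i => (comp i).leafSet) = Finset.range n) ∧
  (∀ a i, ∃ c, (ts a).restrictTo (comp i).leafSet = some c ∧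
      c.clusters = (comp i).clusters) ∧
  (∀ a i j, i ≠ j →
      Disjoint (BTree.spanNodes (ts a) ((comp i).leafSet))
               (BTree.spanNodes (ts a) ((comp j).leafSet)))

/-- Edge of the inheritance graph: some tree has a directed path from the root
of the spanning subtree of component `i` down to that of component `j`. -/
def inhEdge {ι : Type*} (ts : ι → BTree) {f : ℕ} (comp : Fin f → BTree)
    (i j : Fin f) : Prop :=
  i ≠ j ∧ ∃ a, (BTree.lcaPos (ts a) ((comp i).leafSet)) <+:
      (BTree.lcaPos (ts a) ((comp j).leafSet))

/-- `comp` is an acyclic agreement forest for `ts`. -/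
def IsAAF {ι : Type*} (ts : ι → BTree) (n : ℕ) {f : ℕ} (comp : Fin f → BTree) : Prop :=
  IsAF ts n comp ∧ ∀ i, ¬ Relation.TransGen (inhEdge ts comp) i i

/-- Size of a maximum acyclic agreement forest (an AAF with fewest components). -/
noncomputable def maafSize {ι : Type*} (ts : ι → BTree) (n : ℕ) : ℕ :=
  sInf {f | ∃ comp : Fin f → BTree, IsAAF ts n comp}

end OLA
namespace OLA

/-- See statement 9: component assignment in the AAF construction. -/
noncomputable def belongs (M : Finset ℕ) (v : ℕ → ℤ) : ℕ → ℕ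
  | j =>
    if j ∈ M then (M.filter (· ≤ j)).card
    else if h : (v j).natAbs < j then belongs M v (v j).natAbs else 0
  termination_by j => j

/-- The `i`-th mismatched position (`m_0 = 0`). -/
noncomputable def mVal (M : Finset ℕ) (i : ℕ) : ℕ :=
  if i = 0 then 0 else (M.sort (· ≤ ·)).getD (i - 1) 0

/-!
Grow `T` leaf by leaf: `T^(j+1)` arises from `T^j` by grafting the leaf `j + 1` next to the
node `w` whose OLA index is the entry at `j + 1`. Follow the subtree below the root of
`T(L_i ∩ {0, …, j})` from `j = m_i`, where it is the single leaf `m_i`. A grafted leaf outside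
`L_i` can enter this subtree only as itself. A grafted leaf `x ∈ L_i` is not mismatched, so its
entry is common to all trees and points at a leaf of `L_i` below `w`; as the entry is not the
internal node `-m_i`, `w` is no proper ancestor of the root, and again only `x` is added. All
grafted leaves exceed `m_i`, so no leaf below the root is smaller than `m_i`.

If `r_i` lies above `r_j`, then `m_j` lies below `r_i`, so `m_i ≤ m_j`, and `i ≤ j` because the
`m_i` increase with `i`: every edge of the inheritance graph points forward.
-/

namespace BTree

lemma mem_leafSet {t : BTree} {x : ℕ} : x ∈ t.leafSet ↔ x ∈ t.leafList := List.mem_toFinset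

lemma minLeaf_mem : ∀ t : BTree, t.minLeaf ∈ t.leafList
  | .leaf x => by simp [leafList, minLeaf]
  | .node l r => by
    rcases min_cases l.minLeaf r.minLeaf with ⟨h, _⟩ | ⟨h, _⟩ <;>
      simp [leafList, minLeaf, h, minLeaf_mem l, minLeaf_mem r]

lemma minLeaf_le : ∀ {t : BTree} {y : ℕ}, y ∈ t.leafList → t.minLeaf ≤ y
  | .leaf _, _, hy => by simp_all [leafList, minLeaf]
  | .node l r, _, hy => by
    rcases List.mem_append.1 hy with h | h
    · exact (min_le_left _ _).trans (minLeaf_le h)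
    · exact (min_le_right _ _).trans (minLeaf_le h)

lemma natAbs_idx_node (l r : BTree) : (node l r).idx.natAbs = max l.minLeaf r.minLeaf := by
  rw [idx, Int.natAbs_neg, ← Nat.cast_max, Int.natAbs_natCast]

lemma natAbs_idx_mem_leafList : ∀ t : BTree, t.idx.natAbs ∈ t.leafList
  | .leaf x => by simp [idx, leafList]
  | .node l r => by
    rw [natAbs_idx_node, leafList, List.mem_append]
    rcases max_choice l.minLeaf r.minLeaf with h | h <;> rw [h]
    · exact Or.inl (minLeaf_mem l)
    · exact Or.inr (minLeaf_mem r)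

lemma nodup_node {l r : BTree} (h : (node l r).leafList.Nodup) :
    l.leafList.Nodup ∧ r.leafList.Nodup ∧ ∀ x ∈ l.leafList, x ∉ r.leafList := by
  simp only [leafList, List.nodup_append] at h
  exact ⟨h.1, h.2.1, fun x hx hx' => h.2.2 x hx x hx' rfl⟩

lemma leafList_relabel (f : ℕ → ℕ) (t : BTree) :
    (t.relabel f).leafList = t.leafList.map f := by
  induction t with
  | leaf x => rfl
  | node l r ihl ihr => simp [relabel, leafList, ihl, ihr]

lemma IsPhylo.relabel {t : BTree} {n : ℕ} (ht : t.IsPhylo n) {σ : Equiv.Perm ℕ}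
    (hσ : IsOrdering σ n) : (t.relabel σ).IsPhylo n := by
  refine ⟨leafList_relabel σ t ▸ ht.1.map σ.injective, ?_⟩
  have hσn : (Finset.range n).image σ = Finset.range n :=
    Finset.eq_of_subset_of_card_le (fun y hy => by
      obtain ⟨x, hx, rfl⟩ := Finset.mem_image.1 hy
      exact Finset.mem_range.2 (hσ x (Finset.mem_range.1 hx)))
      (Finset.card_image_of_injective _ σ.injective).ge
  rw [← hσn, ← ht.2]
  ext y
  simp [leafSet, leafList_relabel]

lemma IsPhylo.pos {t : BTree} {n : ℕ} (ht : t.IsPhylo n) : 0 < n := by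
  have := mem_leafSet.2 (minLeaf_mem t)
  rw [ht.2, Finset.mem_range] at this
  omega

lemma mem_leafList_of_subtreeAt {t u : BTree} {p : List Bool} (h : t.subtreeAt p = some u) :
    ∀ y ∈ u.leafList, y ∈ t.leafList := by
  induction p generalizing t with
  | nil => simp only [subtreeAt, Option.some.injEq] at h; exact h ▸ fun y hy => hy
  | cons b p ih =>
    cases t with
    | leaf x => simp [subtreeAt] at h
    | node l r =>
      cases b
      · exact fun y hy => List.mem_append_left _ (ih h y hy)
      · exact fun y hy => List.mem_append_right _ (ih h y hy)

lemma subtreeAt_append (t : BTree) (p q : List Bool) :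
    t.subtreeAt (p ++ q) = (t.subtreeAt p).bind (·.subtreeAt q) := by
  induction p generalizing t with
  | nil => simp [subtreeAt]
  | cons b p ih => cases t with
    | leaf x => rfl
    | node l r => cases b <;> simp [subtreeAt, ih]

lemma mem_leafList_of_isPrefix {t u u' : BTree} {p p' : List Bool} (hp : p <+: p')
    (hu : t.subtreeAt p = some u) (hu' : t.subtreeAt p' = some u') :
    ∀ y ∈ u'.leafList, y ∈ u.leafList := by
  obtain ⟨q, rfl⟩ := hp
  rw [subtreeAt_append, hu] at hu'
  exact mem_leafList_of_subtreeAt hu'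

lemma siblingIdx_eq_none {t : BTree} {x : ℕ} (hx : x ∉ t.leafList) : t.siblingIdx x = none := by
  induction t with
  | leaf y => rfl
  | node l r ihl ihr =>
    simp only [leafList, List.mem_append, not_or] at hx
    have hl : l ≠ .leaf x := by rintro rfl; exact hx.1 (by simp [leafList])
    have hr : r ≠ .leaf x := by rintro rfl; exact hx.2 (by simp [leafList])
    simp [siblingIdx, hl, hr, ihl hx.1, ihr hx.2, Option.orElse]

def lcaTree : BTree → Finset ℕ → BTree
  | .leaf x, _ => .leaf x
  | .node l r, S =>
    if S ⊆ l.leafSet then lcaTree l S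
    else if S ⊆ r.leafSet then lcaTree r S
    else .node l r

lemma subtreeAt_lcaPos :
    ∀ (t : BTree) (S : Finset ℕ), t.subtreeAt (t.lcaPos S) = some (t.lcaTree S)
  | .leaf _, _ => rfl
  | .node l r, S => by
    simp only [lcaPos, lcaTree]
    split_ifs <;> simp only [subtreeAt, subtreeAt_lcaPos]

lemma subset_leafSet_lcaTree :
    ∀ {t : BTree} {S : Finset ℕ}, S ⊆ t.leafSet → S ⊆ (t.lcaTree S).leafSet
  | .leaf _, _, h => h
  | .node l r, S, h => by
    simp only [lcaTree]
    split_ifs with hl hr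
    · exact subset_leafSet_lcaTree hl
    · exact subset_leafSet_lcaTree hr
    · exact h

lemma lcaTree_singleton : ∀ {t : BTree} {x : ℕ}, t.leafList.Nodup → x ∈ t.leafList →
    t.lcaTree {x} = .leaf x
  | .leaf _, _, _, hx => by simp_all [leafList, lcaTree]
  | .node l r, x, hnd, hx => by
    obtain ⟨hndl, hndr, hdisj⟩ := nodup_node hnd
    simp only [lcaTree, Finset.singleton_subset_iff, mem_leafSet]
    rcases List.mem_append.1 hx with h | h
    · rw [if_pos h, lcaTree_singleton hndl h]
    · rw [if_neg (fun h' => hdisj x h' h), if_pos h, lcaTree_singleton hndr h]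

lemma max_minLeaf_notMem_of_lt {l r : BTree} (hdisj : ∀ x ∈ l.leafList, x ∉ r.leafList)
    {m : ℕ} (hm : m ∈ l.leafList) (hmb : m < max l.minLeaf r.minLeaf) :
    max l.minLeaf r.minLeaf ∉ l.leafList := by
  have hb : max l.minLeaf r.minLeaf = r.minLeaf := by
    have := minLeaf_le hm
    rcases max_choice l.minLeaf r.minLeaf with h | h <;> omega
  rw [hb]
  exact fun h => hdisj _ h (minLeaf_mem r)

/-- For a node `w`, the leaves `|w.idx|` and `m < |w.idx|` of `S` lie in different children. -/
lemma lcaTree_eq_self_of_idx {w : BTree} (hnd : w.leafList.Nodup) {S : Finset ℕ} {m : ℕ}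
    (hm : m ∈ S) (hmS : ∀ s ∈ S, m ≤ s) (hidx : w.idx.natAbs ∈ S) (hne : w.idx ≠ -m) :
    w.lcaTree S = w := by
  cases w with
  | leaf x => rfl
  | node l r =>
    obtain ⟨-, -, hdisj⟩ := nodup_node hnd
    rw [natAbs_idx_node] at hidx
    have hmb : m < max l.minLeaf r.minLeaf := by
      have h1 := hmS _ hidx
      have h2 : max l.minLeaf r.minLeaf ≠ m := fun h => hne (by rw [idx, ← Nat.cast_max, h])
      omega
    have hl : ¬ S ⊆ l.leafSet := fun h =>
      max_minLeaf_notMem_of_lt hdisj (mem_leafSet.1 (h hm)) hmb (mem_leafSet.1 (h hidx))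
    have hr : ¬ S ⊆ r.leafSet := fun h => by
      rw [max_comm] at hmb hidx
      exact max_minLeaf_notMem_of_lt (fun x hx hx' => hdisj x hx' hx) (mem_leafSet.1 (h hm)) hmb
        (mem_leafSet.1 (h hidx))
    simp only [lcaTree, if_neg hl, if_neg hr]


/-- `Ins x w u u'`: the tree `u'` arises from `u` by grafting the new leaf `x` onto the edge
above the node `w` of `u` (or above its root), so that `w` becomes the sibling of `x`. -/
inductive Ins (x : ℕ) : BTree → BTree → BTree → Prop
  | graft_right (w : BTree) : Ins x w w (.node w (.leaf x))
  | graft_left (w : BTree) : Ins x w w (.node (.leaf x) w)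
  | left {w l l' : BTree} (r : BTree) : Ins x w l l' → Ins x w (.node l r) (.node l' r)
  | right {w r r' : BTree} (l : BTree) : Ins x w r r' → Ins x w (.node l r) (.node l r')

namespace Ins

variable {x : ℕ} {w u u' : BTree}

lemma mem_leafList (h : Ins x w u u') (y : ℕ) :
    y ∈ u'.leafList ↔ y = x ∨ y ∈ u.leafList := by
  induction h with
  | graft_right => simp [leafList, or_comm]
  | graft_left => simp [leafList]
  | left r _ ih | right l _ ih => simp only [leafList, List.mem_append, ih]; tauto

lemma leafSet_eq (h : Ins x w u u') : u'.leafSet = insert x u.leafSet := by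
  ext y
  simp [mem_leafSet, h.mem_leafList y]

lemma subset_leafSet_iff (h : Ins x w u u') {S : Finset ℕ} (hx : x ∉ S) :
    S ⊆ u'.leafSet ↔ S ⊆ u.leafSet := by
  rw [h.leafSet_eq, Finset.subset_insert_iff_of_notMem hx]

lemma mem_leafList_of_mem_sibling (h : Ins x w u u') {y : ℕ} (hy : y ∈ w.leafList) :
    y ∈ u.leafList := by
  induction h with
  | graft_right | graft_left => exact hy
  | left r _ ih => exact List.mem_append_left _ ih
  | right l _ ih => exact List.mem_append_right _ ih

lemma nodup_sibling (h : Ins x w u u') (hnd : u.leafList.Nodup) : w.leafList.Nodup := by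
  induction h with
  | graft_right | graft_left => exact hnd
  | left r _ ih => exact ih (nodup_node hnd).1
  | right l _ ih => exact ih (nodup_node hnd).2.1

lemma ne_leaf (h : Ins x w u u') (y : ℕ) : u' ≠ .leaf y := by
  cases h <;> simp

lemma siblingIdx_eq (h : Ins x w u u') (hnd : u'.leafList.Nodup) :
    u'.siblingIdx x = some w.idx := by
  induction h with
  | graft_right => by_cases hw : w = .leaf x <;> simp [siblingIdx, hw]
  | graft_left => simp [siblingIdx]
  | left r h ih =>
    obtain ⟨hnd', -, hdisj⟩ := nodup_node hnd
    have hr : r ≠ .leaf x := by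
      rintro rfl
      exact hdisj x ((h.mem_leafList x).2 (Or.inl rfl)) (by simp [leafList])
    simp [siblingIdx, h.ne_leaf, hr, ih hnd', Option.orElse]
  | right l h ih =>
    obtain ⟨-, hnd', hdisj⟩ := nodup_node hnd
    have hxl : x ∉ l.leafList := fun hx => hdisj x hx ((h.mem_leafList x).2 (Or.inl rfl))
    have hl : l ≠ .leaf x := by
      rintro rfl
      exact hxl (by simp [leafList])
    simp [siblingIdx, h.ne_leaf, hl, siblingIdx_eq_none hxl, ih hnd', Option.orElse]

lemma mem_lcaTree (h : Ins x w u u') {S : Finset ℕ} (hS : S ⊆ u.leafSet) (hx : x ∉ S) :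
    ∀ y ∈ (u'.lcaTree S).leafList, y = x ∨ y ∈ (u.lcaTree S).leafList := by
  induction h with
  | graft_right =>
    simp only [lcaTree, if_pos hS]
    exact fun y hy => Or.inr hy
  | graft_left =>
    simp only [lcaTree]
    split_ifs
    · simp [leafList]
    · exact fun y hy => Or.inr hy
  | left r h ih =>
    simp only [lcaTree, h.subset_leafSet_iff hx]
    split_ifs with hl hr
    · exact ih hl
    · exact fun y hy => Or.inr hy
    · exact fun y => ((h.left r).mem_leafList y).1
  | right l h ih =>
    simp only [lcaTree, h.subset_leafSet_iff hx]
    split_ifs with hl hr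
    · exact fun y hy => Or.inr hy
    · exact ih hr
    · exact fun y => ((h.right l).mem_leafList y).1

/-- `hw` says that `w` is no proper ancestor of the root of `T(S)`; otherwise the root of
`T(S ∪ {x})` would be the new parent of `w` and `x`. -/
lemma mem_lcaTree_insert (h : Ins x w u u') (hnd : u.leafList.Nodup) (hxu : x ∉ u.leafList)
    {S : Finset ℕ} (hS : S ⊆ u.leafSet) {s : ℕ} (hs : s ∈ S) (hsw : s ∈ w.leafList)
    (hw : w.lcaTree S = w) :
    ∀ y ∈ (u'.lcaTree (insert x S)).leafList, y = x ∨ y ∈ (u.lcaTree S).leafList := by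
  have hxS : x ∉ S := fun hx => hxu (mem_leafSet.1 (hS hx))
  have hsx : s ≠ x := fun h => hxS (h ▸ hs)
  induction h with
  | graft_right | graft_left =>
    have h1 : ¬ insert x S ⊆ w.leafSet := fun h' =>
      hxu (mem_leafSet.1 (h' (Finset.mem_insert_self x S)))
    have h2 : ¬ insert x S ⊆ (leaf x).leafSet := fun h' =>
      hsx (by simpa [leafSet, leafList] using h' (Finset.mem_insert_of_mem hs))
    simp only [lcaTree, if_neg h1, if_neg h2, hw]
    intro y hy
    simp only [leafList, List.mem_append, List.mem_singleton] at hy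
    tauto
  | left r h ih =>
    rename_i l l'
    obtain ⟨hndl, -, hdisj⟩ := nodup_node hnd
    have hxl : x ∉ l.leafList := fun hx => hxu (List.mem_append_left _ hx)
    have hr' : ¬ insert x S ⊆ r.leafSet := fun h' =>
      hxu (List.mem_append_right _ (mem_leafSet.1 (h' (Finset.mem_insert_self x S))))
    by_cases hl : S ⊆ l.leafSet
    · have hl' : insert x S ⊆ l'.leafSet := h.leafSet_eq ▸ Finset.insert_subset_insert x hl
      simp only [lcaTree, if_pos hl, if_pos hl']
      exact ih hndl hxl hl
    · have hr : ¬ S ⊆ r.leafSet := fun hr =>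
        hdisj s (h.mem_leafList_of_mem_sibling hsw) (mem_leafSet.1 (hr hs))
      have hl' : ¬ insert x S ⊆ l'.leafSet := fun h' =>
        hl ((h.subset_leafSet_iff hxS).1 ((Finset.subset_insert x S).trans h'))
      simp only [lcaTree, if_neg hl, if_neg hr, if_neg hl', if_neg hr']
      exact fun y => ((h.left r).mem_leafList y).1
  | right l h ih =>
    rename_i r r'
    obtain ⟨-, hndr, hdisj⟩ := nodup_node hnd
    have hxr : x ∉ r.leafList := fun hx => hxu (List.mem_append_right _ hx)
    have hl : ¬ S ⊆ l.leafSet := fun hl =>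
      hdisj s (mem_leafSet.1 (hl hs)) (h.mem_leafList_of_mem_sibling hsw)
    have hl' : ¬ insert x S ⊆ l.leafSet := fun h' =>
      hxu (List.mem_append_left _ (mem_leafSet.1 (h' (Finset.mem_insert_self x S))))
    by_cases hr : S ⊆ r.leafSet
    · have hr' : insert x S ⊆ r'.leafSet := h.leafSet_eq ▸ Finset.insert_subset_insert x hr
      simp only [lcaTree, if_neg hl, if_pos hr, if_neg hl', if_pos hr']
      exact ih hndr hxr hr
    · have hr' : ¬ insert x S ⊆ r'.leafSet := fun h' =>
        hr ((h.subset_leafSet_iff hxS).1 ((Finset.subset_insert x S).trans h'))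
      simp only [lcaTree, if_neg hl, if_neg hr, if_neg hl', if_neg hr']
      exact fun y => ((h.right l).mem_leafList y).1

end Ins


def optNode : Option BTree → Option BTree → Option BTree
  | some l, some r => some (.node l r)
  | some l, none => some l
  | none, r => r

lemma restrictLe_node (l r : BTree) (j : ℕ) :
    (node l r).restrictLe j = optNode (l.restrictLe j) (r.restrictLe j) := by
  rw [restrictLe]
  rcases l.restrictLe j with _ | _ <;> rcases r.restrictLe j with _ | _ <;> rfl

lemma leafList_restrictLe (t : BTree) (j : ℕ) :
    ((t.restrictLe j).map leafList).getD [] = t.leafList.filter (· ≤ j) := by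
  induction t with
  | leaf x => by_cases hx : x ≤ j <;> simp [restrictLe, leafList, hx]
  | node l r ihl ihr =>
    rw [restrictLe_node, leafList, List.filter_append, ← ihl, ← ihr]
    rcases l.restrictLe j with _ | _ <;> rcases r.restrictLe j with _ | _ <;>
      simp [optNode, leafList]

lemma leafList_eq_filter_of_restrictLe {t u : BTree} {j : ℕ} (hu : t.restrictLe j = some u) :
    u.leafList = t.leafList.filter (· ≤ j) := by
  simpa [hu] using leafList_restrictLe t j

lemma restrictLe_ne_none {t : BTree} {x j : ℕ} (hx : x ∈ t.leafList) (hxj : x ≤ j) :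
    t.restrictLe j ≠ none := by
  intro h
  have := leafList_restrictLe t j
  rw [h, Option.map_none, Option.getD_none, eq_comm, List.filter_eq_nil_iff] at this
  exact this x hx (by simpa using hxj)

lemma restrictLe_eq_self {t : BTree} {j : ℕ} (h : ∀ x ∈ t.leafList, x ≤ j) :
    t.restrictLe j = some t := by
  induction t with
  | leaf x => simp [restrictLe, h x (by simp [leafList])]
  | node l r ihl ihr =>
    simp only [leafList, List.mem_append] at h
    rw [restrictLe_node, ihl fun x hx => h x (Or.inl hx), ihr fun x hx => h x (Or.inr hx)]
    rfl

lemma restrictLe_succ_of_notMem {t : BTree} {j : ℕ} (h : j + 1 ∉ t.leafList) :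
    t.restrictLe (j + 1) = t.restrictLe j := by
  induction t with
  | leaf x =>
    have : x ≤ j + 1 ↔ x ≤ j := by simp [leafList] at h; omega
    simp only [restrictLe, this]
  | node l r ihl ihr =>
    simp only [leafList, List.mem_append, not_or] at h
    rw [restrictLe_node, restrictLe_node, ihl h.1, ihr h.2]

lemma restrictLe_succ_of_eq_none {t : BTree} {j : ℕ} (hnd : t.leafList.Nodup)
    (h : j + 1 ∈ t.leafList) (hj : t.restrictLe j = none) :
    t.restrictLe (j + 1) = some (.leaf (j + 1)) := by
  induction t with
  | leaf x => simp_all [leafList, restrictLe]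
  | node l r ihl ihr =>
    obtain ⟨hndl, hndr, hdisj⟩ := nodup_node hnd
    rw [restrictLe_node] at hj ⊢
    obtain ⟨hl, hr⟩ : l.restrictLe j = none ∧ r.restrictLe j = none := by
      revert hj; rcases l.restrictLe j with _ | _ <;> rcases r.restrictLe j with _ | _ <;>
        simp [optNode]
    rcases List.mem_append.1 h with h | h
    · rw [ihl hndl h hl, restrictLe_succ_of_notMem (hdisj _ h), hr]; rfl
    · rw [ihr hndr h hr, restrictLe_succ_of_notMem (fun h' => hdisj _ h' h), hl]; rfl

lemma restrictLe_succ {t : BTree} {j : ℕ} (hnd : t.leafList.Nodup) (h : j + 1 ∈ t.leafList)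
    {u : BTree} (hu : t.restrictLe j = some u) :
    ∃ w u', t.restrictLe (j + 1) = some u' ∧ Ins (j + 1) w u u' := by
  induction t generalizing u with
  | leaf x =>
    rw [leafList, List.mem_singleton] at h
    simp [restrictLe, ← h] at hu
  | node l r ihl ihr =>
    obtain ⟨hndl, hndr, hdisj⟩ := nodup_node hnd
    rw [restrictLe_node] at hu ⊢
    rcases List.mem_append.1 h with h | h
    · rw [restrictLe_succ_of_notMem (hdisj _ h)]
      rcases hl : l.restrictLe j with _ | ul
      · rw [restrictLe_succ_of_eq_none hndl h hl]
        rcases hr : r.restrictLe j with _ | ur <;> simp only [hl, hr, optNode] at hu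
        · cases hu
        · cases hu; exact ⟨u, _, rfl, .graft_left u⟩
      · obtain ⟨w, ul', hl', hins⟩ := ihl hndl h hl
        rw [hl']
        rcases hr : r.restrictLe j with _ | ur <;>
          simp only [hl, hr, optNode, Option.some.injEq] at hu <;> subst hu
        · exact ⟨w, ul', rfl, hins⟩
        · exact ⟨w, _, rfl, hins.left ur⟩
    · rw [restrictLe_succ_of_notMem (fun h' => hdisj _ h' h)]
      rcases hr : r.restrictLe j with _ | ur
      · rw [restrictLe_succ_of_eq_none hndr h hr]
        rcases hl : l.restrictLe j with _ | ul <;> simp only [hl, hr, optNode] at hu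
        · cases hu
        · cases hu; exact ⟨u, _, rfl, .graft_right u⟩
      · obtain ⟨w, ur', hr', hins⟩ := ihr hndr h hr
        rw [hr']
        rcases hl : l.restrictLe j with _ | ul <;>
          simp only [hl, hr, optNode, Option.some.injEq] at hu <;> subst hu
        · exact ⟨w, ur', rfl, hins⟩
        · exact ⟨w, _, rfl, hins.right ul⟩

lemma filter_le_succ_of_mem {S : Finset ℕ} {j : ℕ} (h : j + 1 ∈ S) :
    S.filter (· ≤ j + 1) = insert (j + 1) (S.filter (· ≤ j)) := by
  ext y
  simp only [Finset.mem_filter, Finset.mem_insert]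
  grind

lemma filter_le_succ_of_notMem {S : Finset ℕ} {j : ℕ} (h : j + 1 ∉ S) :
    S.filter (· ≤ j + 1) = S.filter (· ≤ j) := by
  ext y
  simp only [Finset.mem_filter]
  grind

section LcaTreeOfRestriction

variable {T : BTree} {S : Finset ℕ} {m : ℕ}

lemma mem_lcaTree_restrictLe_succ (hnd : T.leafList.Nodup) (hST : S ⊆ T.leafSet)
    (hmS : m ∈ S) (hSm : ∀ s ∈ S, m ≤ s)
    (hclosed : ∀ x ∈ S, x ≠ m →
      (T.olaEntry x).natAbs ∈ S ∧ (T.olaEntry x).natAbs < x ∧ T.olaEntry x ≠ -m)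
    {j : ℕ} (hj : m ≤ j) (hjT : j + 1 ∈ T.leafList) {u₀ u : BTree}
    (hu₀ : T.restrictLe j = some u₀) (hu : T.restrictLe (j + 1) = some u) :
    ∀ y ∈ (u.lcaTree (S.filter (· ≤ j + 1))).leafList,
      y = j + 1 ∨ y ∈ (u₀.lcaTree (S.filter (· ≤ j))).leafList := by
  obtain ⟨w, u', hu', hins⟩ := restrictLe_succ hnd hjT hu₀
  obtain rfl : u' = u := Option.some.inj (hu' ▸ hu)
  have hleaves₀ := leafList_eq_filter_of_restrictLe hu₀
  have hnd₀ : u₀.leafList.Nodup := hleaves₀ ▸ hnd.filter _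
  have hxu₀ : j + 1 ∉ u₀.leafList := by simp [hleaves₀]
  have hSj : S.filter (· ≤ j) ⊆ u₀.leafSet := fun y hy => by
    rw [Finset.mem_filter] at hy
    simpa [mem_leafSet, hleaves₀] using ⟨mem_leafSet.1 (hST hy.1), hy.2⟩
  by_cases hjS : j + 1 ∈ S
  · have hidx : T.olaEntry (j + 1) = w.idx := by
      simp [olaEntry, hu, hins.siblingIdx_eq (leafList_eq_filter_of_restrictLe hu ▸ hnd.filter _)]
    obtain ⟨hwS, hwj, hwm⟩ := hidx ▸ hclosed (j + 1) hjS (by omega)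
    have hwSj : w.idx.natAbs ∈ S.filter (· ≤ j) := Finset.mem_filter.2 ⟨hwS, by omega⟩
    have hw : w.lcaTree (S.filter (· ≤ j)) = w :=
      lcaTree_eq_self_of_idx (hins.nodup_sibling hnd₀) (Finset.mem_filter.2 ⟨hmS, hj⟩)
        (fun s hs => hSm s (Finset.mem_filter.1 hs).1) hwSj hwm
    rw [filter_le_succ_of_mem hjS]
    exact hins.mem_lcaTree_insert hnd₀ hxu₀ hSj hwSj (natAbs_idx_mem_leafList w) hw
  · rw [filter_le_succ_of_notMem hjS]
    exact hins.mem_lcaTree hSj (by simp [hjS])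

lemma le_of_mem_lcaTree_restrictLe (hnd : T.leafList.Nodup) (hST : S ⊆ T.leafSet)
    (hmS : m ∈ S) (hSm : ∀ s ∈ S, m ≤ s)
    (hclosed : ∀ x ∈ S, x ≠ m →
      (T.olaEntry x).natAbs ∈ S ∧ (T.olaEntry x).natAbs < x ∧ T.olaEntry x ≠ -m)
    {j : ℕ} (hj : m ≤ j) {u : BTree} (hu : T.restrictLe j = some u) :
    ∀ y ∈ (u.lcaTree (S.filter (· ≤ j))).leafList, m ≤ y := by
  have hmT : m ∈ T.leafList := mem_leafSet.1 (hST hmS)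
  induction j, hj using Nat.le_induction generalizing u with
  | base =>
    have hleaves := leafList_eq_filter_of_restrictLe hu
    have hSm' : S.filter (· ≤ m) = {m} := by
      ext y
      simp only [Finset.mem_filter, Finset.mem_singleton]
      grind
    rw [hSm', lcaTree_singleton (hleaves ▸ hnd.filter _) (by simp [hleaves, hmT])]
    simp [leafList]
  | succ j hj ih =>
    obtain ⟨u₀, hu₀⟩ := Option.ne_none_iff_exists'.1 (restrictLe_ne_none hmT hj)
    by_cases hjT : j + 1 ∈ T.leafList
    · intro y hy
      rcases mem_lcaTree_restrictLe_succ hnd hST hmS hSm hclosed hj hjT hu₀ hu y hy with rfl | hy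
      · omega
      · exact ih hu₀ y hy
    · rw [restrictLe_succ_of_notMem hjT, hu₀, Option.some.injEq] at hu
      rw [← hu, filter_le_succ_of_notMem fun h => hjT (mem_leafSet.1 (hST h))]
      exact ih hu₀

theorem le_of_mem_lcaTree (hnd : T.leafList.Nodup) (hST : S ⊆ T.leafSet)
    (hmS : m ∈ S) (hSm : ∀ s ∈ S, m ≤ s)
    (hclosed : ∀ x ∈ S, x ≠ m →
      (T.olaEntry x).natAbs ∈ S ∧ (T.olaEntry x).natAbs < x ∧ T.olaEntry x ≠ -m) :
    ∀ y ∈ (T.lcaTree S).leafList, m ≤ y := by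
  set N := max m (T.leafSet.sup id)
  have hN : ∀ x ∈ T.leafList, x ≤ N := fun x hx =>
    le_max_of_le_right (Finset.le_sup (f := id) (mem_leafSet.2 hx))
  have hSN : S.filter (· ≤ N) = S :=
    Finset.filter_true_of_mem fun x hx => hN x (mem_leafSet.1 (hST hx))
  have := le_of_mem_lcaTree_restrictLe hnd hST hmS hSm hclosed (le_max_left _ _)
    (restrictLe_eq_self hN)
  rwa [hSN] at this

end LcaTreeOfRestriction

end BTree

section Mismatch

variable {ι : Type*} (V : ι → ℕ → ℤ)

lemma mismatch_subset_Icc (i : ℕ) : mismatch V i ⊆ Finset.Icc 1 i := by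
  induction i with
  | zero => simp [mismatch]
  | succ i ih =>
    rw [mismatch]
    have : Finset.Icc 1 i ⊆ Finset.Icc 1 (i + 1) := Finset.Icc_subset_Icc_right (by omega)
    split_ifs
    · exact Finset.insert_subset (by simp) (ih.trans this)
    · exact ih.trans this

lemma mem_mismatch_succ_of_ne {x i : ℕ} (hx : x ≠ i + 1) :
    x ∈ mismatch V (i + 1) ↔ x ∈ mismatch V i := by
  rw [mismatch]
  split_ifs <;> simp [hx]

lemma mem_mismatch_iff {x i : ℕ} : x ∈ mismatch V i ↔ x ≤ i ∧ x ∈ mismatch V x := by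
  induction i with
  | zero =>
    refine ⟨fun h => by simp [mismatch] at h, fun ⟨h, h'⟩ => ?_⟩
    obtain rfl := Nat.le_zero.1 h
    exact h'
  | succ i ih =>
    by_cases hx : x = i + 1
    · subst hx; simp
    · rw [mem_mismatch_succ_of_ne V hx, ih]
      exact and_congr_left' (by omega)

lemma eq_of_notMem_mismatch {x N : ℕ} (hx : 1 ≤ x) (hxN : x ≤ N) (h : x ∉ mismatch V N) :
    (∀ a b, V a x = V b x) ∧ ∀ j ∈ mismatch V N, j < x → ∃ a, V a x ≠ -j := by
  obtain ⟨k, rfl⟩ : ∃ k, x = k + 1 := ⟨x - 1, by omega⟩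
  rw [mem_mismatch_iff, mismatch] at h
  simp only [hxN, true_and] at h
  split_ifs at h with hc
  · exact absurd (Finset.mem_insert_self _ _) h
  · push Not at hc
    refine ⟨hc.1, fun j hj hjk => hc.2 j ?_⟩
    rw [mem_mismatch_iff] at hj ⊢
    exact ⟨by omega, hj.2⟩

end Mismatch

section Components

variable (M : Finset ℕ) (v : ℕ → ℤ)

lemma finite_ofPred_mem : (Set.ofPred (· ∈ M)).Finite := M.finite_toSet

lemma mVal_zero : mVal M 0 = 0 := rfl

lemma mVal_succ (k : ℕ) : mVal M (k + 1) = Nat.nth (· ∈ M) k := by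
  rw [mVal, if_neg k.succ_ne_zero, Nat.add_sub_cancel, Nat.nth_eq_getD_sort (finite_ofPred_mem M)]
  simp

lemma card_filter_le_eq_count (x : ℕ) :
    (M.filter (· ≤ x)).card = Nat.count (· ∈ M) (x + 1) := by
  rw [Nat.count_eq_card_filter_range]
  congr 1
  ext y
  simp [and_comm]

lemma mVal_mem {i : ℕ} (hi : 1 ≤ i) (hiM : i ≤ M.card) : mVal M i ∈ M := by
  obtain ⟨k, rfl⟩ := Nat.exists_eq_add_of_le' hi
  rw [mVal_succ]
  exact Nat.nth_mem_of_lt_card (finite_ofPred_mem M) (by simpa using hiM)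

lemma belongs_of_mem {x : ℕ} (hx : x ∈ M) : belongs M v x = Nat.count (· ∈ M) x + 1 := by
  rw [belongs, if_pos hx, card_filter_le_eq_count, Nat.count_succ, if_pos hx]

lemma belongs_mVal {i : ℕ} (hi : 1 ≤ i) (hiM : i ≤ M.card) : belongs M v (mVal M i) = i := by
  rw [belongs_of_mem M v (mVal_mem M hi hiM)]
  obtain ⟨k, rfl⟩ := Nat.exists_eq_add_of_le' hi
  rw [mVal_succ, Nat.count_nth_of_lt_card_finite (finite_ofPred_mem M) (by simpa using hiM)]

lemma eq_mVal_of_mem {x i : ℕ} (hx : x ∈ M) (h : belongs M v x = i) : x = mVal M i := by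
  rw [← h, belongs_of_mem M v hx, mVal_succ, Nat.nth_count hx]

lemma belongs_of_notMem {x i : ℕ} (hi : i ≠ 0) (hx : x ∉ M) (h : belongs M v x = i) :
    (v x).natAbs < x ∧ belongs M v (v x).natAbs = i := by
  rw [belongs, if_neg hx] at h
  split_ifs at h with hlt
  · exact ⟨hlt, h⟩
  · exact absurd h.symm hi

lemma mVal_le_of_belongs {i : ℕ} (hi : i ≠ 0) {x : ℕ} (h : belongs M v x = i) :
    mVal M i ≤ x := by
  induction x using Nat.strong_induction_on with
  | _ x ih =>
    by_cases hx : x ∈ M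
    · exact (eq_mVal_of_mem M v hx h).ge
    · obtain ⟨hlt, h'⟩ := belongs_of_notMem M v hi hx h
      exact (ih _ hlt h').trans hlt.le

lemma le_of_mVal_le (hM : ∀ x ∈ M, 1 ≤ x) {i j : ℕ} (hi : i ≤ M.card)
    (h : mVal M i ≤ mVal M j) : i ≤ j := by
  rcases Nat.eq_zero_or_pos i with rfl | hi1
  · exact Nat.zero_le j
  rcases Nat.eq_zero_or_pos j with rfl | hj1
  · have := hM _ (mVal_mem M hi1 hi)
    rw [mVal_zero] at h
    omega
  obtain ⟨k, rfl⟩ := Nat.exists_eq_add_of_le' hi1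
  obtain ⟨l, rfl⟩ := Nat.exists_eq_add_of_le' hj1
  rw [mVal_succ, mVal_succ] at h
  by_contra hlk
  exact h.not_gt (Nat.nth_lt_nth_of_lt_card (finite_ofPred_mem M) (by omega) (by simpa using hi))

/-- The leaf set `L_i` of the `i`-th component of the constructed forest. -/
noncomputable def component (n i : ℕ) : Finset ℕ :=
  (Finset.range n).filter (fun j => belongs M v j = i)

lemma mVal_mem_component {n : ℕ} (hM : ∀ x ∈ M, 1 ≤ x ∧ x < n) (hn : 0 < n) {i : ℕ}
    (hi : i ≤ M.card) : mVal M i ∈ component M v n i := by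
  rw [component, Finset.mem_filter, Finset.mem_range]
  rcases Nat.eq_zero_or_pos i with rfl | hi1
  · have h0 : (0 : ℕ) ∉ M := fun h => by simpa using (hM 0 h).1
    rw [mVal_zero, belongs, if_neg h0]
    exact ⟨hn, dif_neg (Nat.not_lt_zero _)⟩
  · exact ⟨(hM _ (mVal_mem M hi1 hi)).2, belongs_mVal M v hi1 hi⟩

end Components

section Construction

variable {ι : Type*} (V : ι → ℕ → ℤ)

/-- A leaf `x ≠ m_i` of `L_i` is not mismatched, so its OLA entry is the same in every tree. -/
lemma component_closed {N : ℕ} (a₀ a : ι) {i x : ℕ} (hi : 1 ≤ i)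
    (hiM : i ≤ (mismatch V N).card) (hxN : x ≤ N) (hx : belongs (mismatch V N) (V a₀) x = i)
    (hxm : x ≠ mVal (mismatch V N) i) :
    (V a x).natAbs < x ∧ belongs (mismatch V N) (V a₀) (V a x).natAbs = i ∧
      V a x ≠ -(mVal (mismatch V N) i) := by
  set M := mismatch V N
  have hxM : x ∉ M := fun h => hxm (eq_mVal_of_mem M _ h hx)
  obtain ⟨hlt, hb⟩ := belongs_of_notMem M (V a₀) (by omega) hxM hx
  obtain ⟨hagree, hnode⟩ := eq_of_notMem_mismatch V (by omega) hxN hxM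
  rw [hagree a a₀]
  refine ⟨hlt, hb, fun h => ?_⟩
  obtain ⟨b, hb⟩ := hnode _ (mVal_mem M hi hiM)
    (lt_of_le_of_ne (mVal_le_of_belongs M _ (by omega) hx) (Ne.symm hxm))
  exact hb (by rw [hagree b a₀, h])

theorem mVal_le_of_mem_lcaTree {n : ℕ} (a₀ a : ι) {T : BTree} (hT : T.IsPhylo n)
    (hTV : T.olaEntry = V a) {i : ℕ} (hi : i ≤ (mismatch V (n - 1)).card) :
    ∀ y ∈ (T.lcaTree (component (mismatch V (n - 1)) (V a₀) n i)).leafList,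
      mVal (mismatch V (n - 1)) i ≤ y := by
  rcases Nat.eq_zero_or_pos i with rfl | hi1
  · simp [mVal_zero]
  set M := mismatch V (n - 1)
  have hm := Finset.mem_Icc.1 (mismatch_subset_Icc V _ (mVal_mem M hi1 hi))
  apply BTree.le_of_mem_lcaTree hT.1
  · rw [hT.2]
    exact Finset.filter_subset _ _
  · exact Finset.mem_filter.2 ⟨Finset.mem_range.2 (by omega), belongs_mVal M _ hi1 hi⟩
  · exact fun s hs => mVal_le_of_belongs M _ (by omega) (Finset.mem_filter.1 hs).2
  · intro x hx hxm
    obtain ⟨hxn, hxb⟩ := Finset.mem_filter.1 hx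
    rw [Finset.mem_range] at hxn
    rw [hTV]
    obtain ⟨hlt, hb, hne⟩ := component_closed V a₀ a hi1 hi (by omega) hxb hxm
    exact ⟨Finset.mem_filter.2 ⟨Finset.mem_range.2 (by omega), hb⟩, hlt, hne⟩

theorem le_of_lcaPos_isPrefix {n : ℕ} (a₀ a : ι) {T : BTree} (hT : T.IsPhylo n)
    (hTV : T.olaEntry = V a) {i j : ℕ} (hi : i ≤ (mismatch V (n - 1)).card)
    (hj : j ≤ (mismatch V (n - 1)).card)
    (hpre : T.lcaPos (component (mismatch V (n - 1)) (V a₀) n i) <+: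
      T.lcaPos (component (mismatch V (n - 1)) (V a₀) n j)) :
    i ≤ j := by
  set M := mismatch V (n - 1)
  have hM : ∀ x ∈ M, 1 ≤ x ∧ x < n := fun x hx => by
    have := Finset.mem_Icc.1 (mismatch_subset_Icc V _ hx)
    omega
  have hmj : mVal M j ∈ (T.lcaTree (component M (V a₀) n j)).leafSet :=
    BTree.subset_leafSet_lcaTree (hT.2 ▸ Finset.filter_subset _ _)
      (mVal_mem_component M _ hM hT.pos hj)
  have hmj' := BTree.mem_leafList_of_isPrefix hpre (BTree.subtreeAt_lcaPos _ _)
    (BTree.subtreeAt_lcaPos _ _) _ (BTree.mem_leafSet.1 hmj)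
  exact le_of_mVal_le M (fun x hx => (hM x hx).1) hi
    (mVal_le_of_mem_lcaTree V a₀ a hT hTV hi _ hmj')

end Construction

theorem stmt10_general {ι : Type} (n : ℕ)
    (ts : ι → BTree) (hts : ∀ a, (ts a).IsPhylo n)
    (σ : Equiv.Perm ℕ) (hσ : IsOrdering σ n) (a₀ : ι) :
    let v : ℕ → ℤ := fun j => ola (ts a₀) σ j
    let M : Finset ℕ := mismatch (fun a => ola (ts a) σ) (n - 1)
    let P : ℕ → Finset ℕ := fun i => (Finset.range n).filter (fun j => belongs M v j = i)
    let edge : Fin (M.card + 1) → Fin (M.card + 1) → Prop := fun i j =>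
      i ≠ j ∧ ∃ a : ι, BTree.lcaPos ((ts a).relabel σ) (P i) <+:
        BTree.lcaPos ((ts a).relabel σ) (P j)
    (∀ a : ι, ∀ i ≤ M.card, ∀ u : BTree,
      ((ts a).relabel σ).subtreeAt (((ts a).relabel σ).lcaPos (P i)) = some u →
      ∀ y ∈ u.leafList, mVal M i ≤ y) ∧
    (∀ i j : Fin (M.card + 1), edge i j → i < j) ∧
    (∀ i : Fin (M.card + 1), ¬ Relation.TransGen edge i i) := by
  intro v M P edge
  have hphylo : ∀ a, ((ts a).relabel σ).IsPhylo n := fun a => (hts a).relabel hσ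
  have forward : ∀ i j : Fin (M.card + 1), edge i j → i < j := fun i j ⟨hne, a, hpre⟩ =>
    lt_of_le_of_ne (le_of_lcaPos_isPrefix (fun a => ola (ts a) σ) a₀ a (hphylo a) rfl
      (Nat.lt_succ_iff.1 i.2) (Nat.lt_succ_iff.1 j.2) hpre) hne
  refine ⟨fun a i hi u hu => ?_, forward, fun i hi => ?_⟩
  · rw [BTree.subtreeAt_lcaPos, Option.some.injEq] at hu
    exact hu ▸ mVal_le_of_mem_lcaTree _ a₀ a (hphylo a) rfl hi
  · have := Relation.TransGen.mono forward i i hi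
    rw [Relation.transGen_eq_self] at this
    exact lt_irrefl i this

/-- Lemma 3 and Corollary 4: in the AAF construction from OLA
vectors, the subtree rooted at the root of `T(L_i)` contains no leaf with
position `< m_i`; consequently the inheritance graph of the constructed forest
has all edges pointing forward and is acyclic. -/
theorem stmt10 {ι : Type} [Fintype ι] [Nonempty ι] (n : ℕ)
    (ts : ι → BTree) (hts : ∀ a, (ts a).IsPhylo n)
    (σ : Equiv.Perm ℕ) (hσ : IsOrdering σ n) (a₀ : ι) :
    let v : ℕ → ℤ := fun j => ola (ts a₀) σ j
    let M : Finset ℕ := mismatch (fun a => ola (ts a) σ) (n - 1)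
    let P : ℕ → Finset ℕ := fun i => (Finset.range n).filter (fun j => belongs M v j = i)
    let edge : Fin (M.card + 1) → Fin (M.card + 1) → Prop := fun i j =>
      i ≠ j ∧ ∃ a : ι, BTree.lcaPos ((ts a).relabel σ) (P i) <+:
        BTree.lcaPos ((ts a).relabel σ) (P j)
    (∀ a : ι, ∀ i ≤ M.card, ∀ u : BTree,
      ((ts a).relabel σ).subtreeAt (((ts a).relabel σ).lcaPos (P i)) = some u →
      ∀ y ∈ u.leafList, mVal M i ≤ y) ∧
    (∀ i j : Fin (M.card + 1), edge i j → i < j) ∧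
    (∀ i : Fin (M.card + 1), ¬ Relation.TransGen edge i i) :=
  stmt10_general n ts hts σ hσ a₀

end OLA
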